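/- The minimum of the direct Okubo shadow is 8: every nonzero x ∈ L_Ok satisfies ⟨x, x⟩ ≥ 8, the value 8 is attained (⟨2b₀, 2b₀⟩ = 8), and in particular L_Ok contains no vector x with ⟨x, x⟩ = 2. -/

import Mathlib

/-!
Expanding the products `i·h, j·h, k·h`, every `uᵢ` has all eight real coordinates in `2ℤ`
(the halves in `h` are cleared by `Dᵢ = 4`), so `L_Ok ⊆ (2ℤ)⁸`. A nonzero vector of `(2ℤ)⁸` has a
coordinate of absolute value at least `2`, so its norm is at least `4` and `⟨x, x⟩ = 2 · norm ≥ 8`.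
Since `⟨0, 0⟩ = 0`, the value `2` is never attained.
-/

noncomputable section

open Quaternion

/-- The octonions as the Cayley–Dickson double of the quaternions. -/
abbrev Octo : Type := ℍ[ℝ] × ℍ[ℝ]

/-- Octonionic product: `(a,b)·(c,d) = (a c − (conj d) b, d a + b (conj c))`. -/
def omul (x y : Octo) : Octo :=
  (x.1 * y.1 - star y.2 * x.2, y.2 * x.1 + x.2 * star y.1)

/-- Octonionic conjugation: `conj (a,b) = (conj a, −b)`. -/
def oconj (x : Octo) : Octo := (star x.1, -x.2)

def oone : Octo := (1, 0)
def oi : Octo := ((⟨0,1,0,0⟩ : ℍ[ℝ]), 0)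
def oj : Octo := ((⟨0,0,1,0⟩ : ℍ[ℝ]), 0)
def ok : Octo := ((⟨0,0,0,1⟩ : ℍ[ℝ]), 0)
def ol : Octo := (0, 1)

/-- `h = (i + j + k + l)/2`. -/
def oh : Octo := (2⁻¹ : ℝ) • (oi + oj + ok + ol)

/-- The Coxeter–Dickson basis `b₀,…,b₇`. -/
def b : Fin 8 → Octo :=
  ![oone, oi, oj, ok, oh, omul oi oh, omul oj oh, omul ok oh]

/-- The Coxeter–Dickson order: the ℤ-span of `b₀,…,b₇`. -/
def CD : Submodule ℤ Octo := Submodule.span ℤ (Set.range b)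

/-- The norm: the sum of the squares of the eight real coordinates. -/
def onorm (x : Octo) : ℝ :=
  x.1.re^2 + x.1.imI^2 + x.1.imJ^2 + x.1.imK^2 +
  x.2.re^2 + x.2.imI^2 + x.2.imJ^2 + x.2.imK^2

/-- The bilinear form `⟨x,y⟩`, obtained by polarization of the norm,
so that `x·(conj y) + y·(conj x) = ⟨x,y⟩·1`. -/
def binner (x y : Octo) : ℝ := onorm (x + y) - onorm x - onorm y

/-- The scaling exponents `(D₀,…,D₇) = (2,2,2,2,4,4,4,4)`. -/
def Dscale : Fin 8 → ℤ := ![2, 2, 2, 2, 4, 4, 4, 4]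

/-- The scaled basis `uᵢ = Dᵢ·bᵢ`. -/
def u : Fin 8 → Octo := fun i => Dscale i • b i

/-- The direct Okubo metric shadow `L_Ok`: the ℤ-span of `u₀,…,u₇`. -/
def LOk : Submodule ℤ Octo := Submodule.span ℤ (Set.range u)

lemma binner_self (x : Octo) : binner x x = 2 * onorm x := by
  simp only [binner, onorm, Prod.fst_add, Prod.snd_add, Quaternion.re_add, Quaternion.imI_add,
    Quaternion.imJ_add, Quaternion.imK_add]
  ring

lemma onorm_eq_normSq_add_normSq (x : Octo) : onorm x = normSq x.1 + normSq x.2 := by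
  simp only [onorm, normSq_def']
  ring

set_option maxHeartbeats 2000000 in
lemma u_eq : u = ![(⟨2, 0, 0, 0⟩, 0), (⟨0, 2, 0, 0⟩, 0), (⟨0, 0, 2, 0⟩, 0), (⟨0, 0, 0, 2⟩, 0),
    (⟨0, 2, 2, 2⟩, ⟨2, 0, 0, 0⟩), (⟨-2, 0, -2, 2⟩, ⟨0, 2, 0, 0⟩), (⟨-2, 2, 0, -2⟩, ⟨0, 0, 2, 0⟩),
    (⟨-2, -2, 2, 0⟩, ⟨0, 0, 0, 2⟩)] := by
  ext i : 1
  simp only [u, ← Int.cast_smul_eq_zsmul ℝ]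
  -- `oi, oj, ok` stay folded until `Quaternion.re_mul` etc. have fired: their anonymous-constructor
  -- literals are typed `QuaternionAlgebra ℝ (-1) 0 (-1)`, which blocks these `ℍ[ℝ]` lemmas.
  fin_cases i <;>
    refine Prod.ext (QuaternionAlgebra.ext ?_ ?_ ?_ ?_) (QuaternionAlgebra.ext ?_ ?_ ?_ ?_) <;>
    simp [b, Dscale, omul, oh, Quaternion.re_mul, Quaternion.imI_mul, Quaternion.imJ_mul,
      Quaternion.imK_mul] <;>
    simp [oone, oi, oj, ok, ol] <;> norm_num

lemma eq_zero_of_mem_zmultiples_of_sq_lt {m r : ℝ} (hr : r ∈ AddSubgroup.zmultiples m)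
    (h : r ^ 2 < m ^ 2) : r = 0 := by
  obtain ⟨n, rfl⟩ := AddSubgroup.mem_zmultiples_iff.mp hr
  rcases eq_or_ne n 0 with rfl | hn
  · simp
  · have hn2 : (1 : ℝ) ≤ (n : ℝ) ^ 2 := by
      have : 0 < n ^ 2 := by positivity
      exact_mod_cast (by omega : (1 : ℤ) ≤ n ^ 2)
    rw [zsmul_eq_mul, mul_pow] at h
    nlinarith [sq_nonneg m]

def scaledLipschitz (m : ℝ) : AddSubgroup ℍ[ℝ] where
  carrier := {q | q.re ∈ AddSubgroup.zmultiples m ∧ q.imI ∈ AddSubgroup.zmultiples m ∧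
    q.imJ ∈ AddSubgroup.zmultiples m ∧ q.imK ∈ AddSubgroup.zmultiples m}
  add_mem' := fun ⟨h₁, h₂, h₃, h₄⟩ ⟨k₁, k₂, k₃, k₄⟩ =>
    ⟨add_mem h₁ k₁, add_mem h₂ k₂, add_mem h₃ k₃, add_mem h₄ k₄⟩
  zero_mem' := ⟨zero_mem _, zero_mem _, zero_mem _, zero_mem _⟩
  neg_mem' := fun ⟨h₁, h₂, h₃, h₄⟩ => ⟨neg_mem h₁, neg_mem h₂, neg_mem h₃, neg_mem h₄⟩

lemma sq_le_normSq_of_mem_scaledLipschitz {m : ℝ} {q : ℍ[ℝ]} (hq : q ∈ scaledLipschitz m)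
    (h : q ≠ 0) : m ^ 2 ≤ normSq q := by
  obtain ⟨h₁, h₂, h₃, h₄⟩ := hq
  rw [normSq_def']
  by_contra! hlt
  have := sq_nonneg q.re
  have := sq_nonneg q.imI
  have := sq_nonneg q.imJ
  have := sq_nonneg q.imK
  exact h (QuaternionAlgebra.ext (eq_zero_of_mem_zmultiples_of_sq_lt h₁ (by linarith))
    (eq_zero_of_mem_zmultiples_of_sq_lt h₂ (by linarith))
    (eq_zero_of_mem_zmultiples_of_sq_lt h₃ (by linarith))
    (eq_zero_of_mem_zmultiples_of_sq_lt h₄ (by linarith)))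

lemma sq_le_onorm_of_mem {m : ℝ} {x : Octo}
    (hx : x ∈ (scaledLipschitz m).prod (scaledLipschitz m)) (h : x ≠ 0) : m ^ 2 ≤ onorm x := by
  rw [AddSubgroup.mem_prod] at hx
  rw [onorm_eq_normSq_add_normSq]
  by_cases h₁ : x.1 = 0
  · have h₂ : x.2 ≠ 0 := fun h₂ => h (Prod.ext h₁ h₂)
    linarith [sq_le_normSq_of_mem_scaledLipschitz hx.2 h₂, normSq_nonneg (a := x.1)]
  · linarith [sq_le_normSq_of_mem_scaledLipschitz hx.1 h₁, normSq_nonneg (a := x.2)]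

lemma LOk_le_scaledLipschitz_two :
    LOk ≤ ((scaledLipschitz 2).prod (scaledLipschitz 2)).toIntSubmodule := by
  refine Submodule.span_le.mpr (Set.range_subset_iff.mpr fun i =>
    AddSubgroup.mem_prod.mpr ⟨⟨?_, ?_, ?_, ?_⟩, ?_, ?_, ?_, ?_⟩) <;>
  fin_cases i <;> simp [u_eq, AddSubgroup.mem_zmultiples]

/-- the minimum of the direct Okubo shadow is `8`: every nonzero
`x ∈ L_Ok` has `⟨x,x⟩ ≥ 8`, the value `8` is attained at `2b₀ ∈ L_Ok`, and in
particular `L_Ok` contains no vector of norm `2`. -/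
theorem okubo_shadow_minimum :
    (∀ x ∈ LOk, x ≠ 0 → 8 ≤ binner x x) ∧
    ((2 : ℤ) • b 0 ∈ LOk ∧ binner ((2 : ℤ) • b 0) ((2 : ℤ) • b 0) = 8) ∧
    ¬ ∃ x ∈ LOk, binner x x = 2 := by
  have hmin : ∀ x ∈ LOk, x ≠ 0 → 8 ≤ binner x x := fun x hx hx0 => by
    have := sq_le_onorm_of_mem (LOk_le_scaledLipschitz_two hx) hx0
    rw [binner_self]
    linarith
  have hu₀ : (2 : ℤ) • b 0 = u 0 := rfl
  refine ⟨hmin, ⟨hu₀ ▸ Submodule.subset_span ⟨0, rfl⟩, ?_⟩, ?_⟩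
  · rw [hu₀, binner_self, u_eq]
    norm_num [onorm]
  · rintro ⟨x, hx, h₂⟩
    rcases eq_or_ne x 0 with rfl | hx0
    · norm_num [binner, onorm] at h₂
    · linarith [hmin x hx hx0]
end
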